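/- arXiv:math/0607069 — 2 statements merged into one kernel-verified Lean document; each statement's English description precedes it below -/
import Mathlib

section
/- Let w ∈ W have reduced decompositions built from simple reflections, and define ∂_w = ∂_{α_1} ⋯ ∂_{α_k} for a reduced word w = s_{α_1} ⋯ s_{α_k}. Then the operators ∂_w on the symmetric algebra satisfy: ∂_w ∂_{w'} = ∂_{ww'} if ℓ(ww') = ℓ(w) + ℓ(w'), and ∂_w ∂_{w'} = 0 otherwise. -/
open MvPolynomial

/-- The linear polynomial in `Sym(X(T)) ≅ ℤ[x₁,…,x_r]` corresponding to a lattice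
element `v ∈ X(T) ≅ ℤ^r`. -/
noncomputable def lin {r : ℕ} (v : Fin r → ℤ) : MvPolynomial (Fin r) ℤ :=
  ∑ i, C (v i) * X i

/-- The algebra endomorphism of `Sym(X(T))` induced by a lattice endomorphism. -/
noncomputable def act {r : ℕ} (σ : Module.End ℤ (Fin r → ℤ)) :
    MvPolynomial (Fin r) ℤ →ₐ[ℤ] MvPolynomial (Fin r) ℤ :=
  aeval fun i => lin (σ (Pi.single i 1))

/-- A (reduced, crystallographic) root system datum in the character lattice
`X(T) ≅ ℤ^r`: roots, a positive system, a simple system, and integral coroots. -/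
structure RootSystemData (r : ℕ) where
  R : Finset (Fin r → ℤ)
  pos : Finset (Fin r → ℤ)
  simple : Finset (Fin r → ℤ)
  coroot : (Fin r → ℤ) → ((Fin r → ℤ) →ₗ[ℤ] ℤ)
  ne_zero : ∀ α ∈ R, α ≠ (0 : Fin r → ℤ)
  coroot_self : ∀ α ∈ R, coroot α α = 2
  neg_mem : ∀ α ∈ R, -α ∈ R
  reduced : ∀ α ∈ R, (2 : ℤ) • α ∉ R
  pos_subset : pos ⊆ R
  pos_total : ∀ α ∈ R, α ∈ pos ∨ -α ∈ pos
  pos_asymm : ∀ α ∈ pos, -α ∉ pos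
  simple_subset : simple ⊆ pos
  simple_indep : LinearIndependent ℤ ((↑) : {x : Fin r → ℤ // x ∈ simple} → (Fin r → ℤ))
  simple_gen : ∀ α ∈ pos, ∃ c : (Fin r → ℤ) → ℕ, α = ∑ β ∈ simple, c β • β
  root_perm : ∀ α ∈ R, ∀ β ∈ R, β - coroot α β • α ∈ R

/-- The reflection `s_α : v ↦ v - ⟨v,α^∨⟩α` of the lattice associated to a root. -/
noncomputable def reflL {r : ℕ} (P : RootSystemData r) (α : Fin r → ℤ) :
    Module.End ℤ (Fin r → ℤ) :=
  LinearMap.id - LinearMap.smulRight (P.coroot α) α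

/-- The Weyl group `W`, i.e. the monoid of lattice endomorphisms generated by all
the reflections `s_α`, `α ∈ R` (each reflection is an involution, so this is in
fact a group). -/
def weyl {r : ℕ} (P : RootSystemData r) : Submonoid (Module.End ℤ (Fin r → ℤ)) :=
  Submonoid.closure ((fun α => reflL P α) '' ↑P.R)

/-- The length `ℓ(σ)` of a Weyl group element: the minimal length of a word in the
simple reflections representing it. -/
noncomputable def len {r : ℕ} (P : RootSystemData r) (σ : Module.End ℤ (Fin r → ℤ)) : ℕ :=
  sInf {n | ∃ l : List (Fin r → ℤ), (∀ β ∈ l, β ∈ P.simple) ∧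
    (l.map (reflL P)).prod = σ ∧ l.length = n}
section Aux

open MvPolynomial

variable {r : ℕ}

lemma lin_eval (v : Fin r → ℤ) (x : Fin r → ℤ) :
    eval x (lin v) = ∑ i, v i * x i := by
  simp [lin]

lemma lin_ne_zero {v : Fin r → ℤ} (hv : v ≠ 0) : lin v ≠ 0 := by
  intro h
  apply hv
  funext i
  have := congrArg (eval (Pi.single i 1)) h
  rw [lin_eval] at this
  simpa [Pi.single_apply, Finset.sum_ite_eq'] using this

lemma lin_add (v w : Fin r → ℤ) : lin (v + w) = lin v + lin w := by
  simp [lin, add_mul, Finset.sum_add_distrib]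

lemma lin_smul (c : ℤ) (v : Fin r → ℤ) : lin (c • v) = C c * lin v := by
  simp [lin, Finset.mul_sum, mul_assoc]

lemma lin_neg (v : Fin r → ℤ) : lin (-v) = - lin v := by
  have := lin_smul (-1) v
  simpa using this

lemma lin_sum {ι : Type*} (s : Finset ι) (f : ι → (Fin r → ℤ)) :
    lin (∑ x ∈ s, f x) = ∑ x ∈ s, lin (f x) := by
  classical
  induction s using Finset.induction with
  | empty => simp [lin]
  | insert a s h ih => rw [Finset.sum_insert h, Finset.sum_insert h, lin_add, ih]

lemma pi_sum_single (v : Fin r → ℤ) : ∑ i, v i • (Pi.single i 1 : Fin r → ℤ) = v := by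
  have : ∀ i, v i • (Pi.single i 1 : Fin r → ℤ) = Pi.single i (v i) := by
    intro i
    rw [← Pi.single_smul]
    simp
  simp_rw [this]
  exact Finset.univ_sum_single v

lemma act_lin (σ : Module.End ℤ (Fin r → ℤ)) (v : Fin r → ℤ) :
    act σ (lin v) = lin (σ v) := by
  have h : σ v = ∑ i, v i • σ (Pi.single i 1) := by
    conv_lhs => rw [← pi_sum_single v]
    rw [map_sum]
    simp_rw [map_smul]
  rw [h, lin_sum, lin, map_sum]
  congr 1
  funext i
  rw [map_mul, lin_smul]
  congr 1
  · rw [show (C (v i) : MvPolynomial (Fin r) ℤ) = algebraMap ℤ _ (v i) from rfl]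
    exact (act σ).commutes (v i)
  · rw [act, aeval_X]

lemma act_mul (σ τ : Module.End ℤ (Fin r → ℤ)) (p : MvPolynomial (Fin r) ℤ) :
    act (σ * τ) p = act σ (act τ p) := by
  have : act (σ * τ) = (act σ).comp (act τ) := by
    apply MvPolynomial.algHom_ext
    intro i
    simp only [act, AlgHom.comp_apply, aeval_X]
    rw [show (aeval fun i => lin (σ (Pi.single i 1))) (lin (τ (Pi.single i 1)))
        = act σ (lin (τ (Pi.single i 1))) from rfl, act_lin]
    rfl
  rw [this]; rfl

lemma act_one (p : MvPolynomial (Fin r) ℤ) : act (1 : Module.End ℤ (Fin r → ℤ)) p = p := by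
  have : act (1 : Module.End ℤ (Fin r → ℤ)) = AlgHom.id ℤ _ := by
    apply MvPolynomial.algHom_ext
    intro i
    simp only [act, aeval_X, AlgHom.id_apply, Module.End.one_apply]
    simp [lin, Pi.single_apply, Finset.sum_ite_eq']
  rw [this]; rfl

lemma reflL_apply (P : RootSystemData r) (α v : Fin r → ℤ) :
    reflL P α v = v - P.coroot α v • α := rfl

lemma reflL_sq (P : RootSystemData r) {α : Fin r → ℤ} (hα : P.coroot α α = 2) :
    reflL P α * reflL P α = 1 := by
  apply LinearMap.ext
  intro v
  simp only [Module.End.mul_apply, reflL_apply, Module.End.one_apply, map_sub, map_smul, hα,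
    smul_eq_mul]
  module

lemma reflL_root (P : RootSystemData r) {α : Fin r → ℤ} (hα : P.coroot α α = 2) :
    reflL P α α = -α := by
  rw [reflL_apply, hα]
  module

lemma coroot_eq_sum (P : RootSystemData r) (α v : Fin r → ℤ) :
    P.coroot α v = ∑ i, v i * P.coroot α (Pi.single i 1) := by
  conv_lhs => rw [← pi_sum_single v]
  rw [map_sum]
  simp_rw [map_smul, smul_eq_mul]

lemma det_reflL (P : RootSystemData r) {α : Fin r → ℤ} (hα : P.coroot α α = 2) :
    LinearMap.det (reflL P α) = -1 := by
  rw [← LinearMap.det_toMatrix']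
  have h1 : LinearMap.toMatrix' (reflL P α)
      = 1 + Matrix.replicateCol Unit (-α) * Matrix.replicateRow Unit (fun j => P.coroot α (Pi.single j 1)) := by
    ext i j
    simp only [reflL, LinearMap.toMatrix'_apply, LinearMap.sub_apply, LinearMap.id_apply,
      LinearMap.smulRight_apply, Pi.sub_apply, Pi.smul_apply, smul_eq_mul,
      Matrix.add_apply, Matrix.mul_apply, Matrix.replicateCol_apply, Matrix.replicateRow_apply,
      Finset.univ_unique, Finset.sum_singleton, Matrix.one_apply, Pi.neg_apply]
    have h0 : (fun j' => if j' = j then (1:ℤ) else 0) = (Pi.single j 1 : Fin r → ℤ) := by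
      funext k; simp [Pi.single_apply]
    by_cases h : i = j <;> simp [h, Pi.single_apply] <;> ring
  rw [h1, Matrix.det_one_add_replicateCol_mul_replicateRow]
  have h2 : dotProduct (fun j => P.coroot α (Pi.single j 1)) (-α)
      = - P.coroot α α := by
    rw [coroot_eq_sum P α α]
    simp [dotProduct, mul_comm]
  rw [h2, hα]
  ring

end Aux
section Aux2

open MvPolynomial

variable {r : ℕ}

lemma D_invariant (P : RootSystemData r)
    (D : (Fin r → ℤ) → MvPolynomial (Fin r) ℤ → MvPolynomial (Fin r) ℤ)
    (hD : ∀ α ∈ P.R, ∀ u, lin α * D α u = u - act (reflL P α) u)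
    {α : Fin r → ℤ} (hα : α ∈ P.R) (u : MvPolynomial (Fin r) ℤ) :
    act (reflL P α) (D α u) = D α u := by
  have hne : lin α ≠ 0 := lin_ne_zero (P.ne_zero α hα)
  have h2 : P.coroot α α = 2 := P.coroot_self α hα
  have h1 := hD α hα u
  have h3 := congrArg (act (reflL P α)) h1
  rw [map_mul, map_sub, act_lin, reflL_root P h2, lin_neg, ← act_mul, reflL_sq P h2,
    act_one] at h3
  have h5 : lin α * act (reflL P α) (D α u) = lin α * D α u := by
    linear_combination -h3 - h1
  exact mul_left_cancel₀ hne h5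

lemma D_sq (P : RootSystemData r)
    (D : (Fin r → ℤ) → MvPolynomial (Fin r) ℤ → MvPolynomial (Fin r) ℤ)
    (hD : ∀ α ∈ P.R, ∀ u, lin α * D α u = u - act (reflL P α) u)
    {α : Fin r → ℤ} (hα : α ∈ P.R) (u : MvPolynomial (Fin r) ℤ) :
    D α (D α u) = 0 := by
  have hne : lin α ≠ 0 := lin_ne_zero (P.ne_zero α hα)
  have h := hD α hα (D α u)
  rw [D_invariant P D hD hα u, sub_self] at h
  rcases mul_eq_zero.1 h with h | h
  exacts [absurd h hne, h]

lemma D_zero (P : RootSystemData r)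
    (D : (Fin r → ℤ) → MvPolynomial (Fin r) ℤ → MvPolynomial (Fin r) ℤ)
    (hD : ∀ α ∈ P.R, ∀ u, lin α * D α u = u - act (reflL P α) u)
    {α : Fin r → ℤ} (hα : α ∈ P.R) : D α 0 = 0 := by
  have hne : lin α ≠ 0 := lin_ne_zero (P.ne_zero α hα)
  have h := hD α hα 0
  rw [map_zero, sub_zero] at h
  rcases mul_eq_zero.1 h with h | h
  exacts [absurd h hne, h]

lemma word_mem_weyl (P : RootSystemData r) {l : List (Fin r → ℤ)}
    (hl : ∀ β ∈ l, β ∈ P.simple) : (l.map (reflL P)).prod ∈ weyl P := by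
  apply Submonoid.list_prod_mem
  intro x hx
  rw [List.mem_map] at hx
  obtain ⟨β, hβ, rfl⟩ := hx
  exact Submonoid.subset_closure ⟨β, P.pos_subset (P.simple_subset (hl β hβ)), rfl⟩

lemma len_le (P : RootSystemData r) {σ : Module.End ℤ (Fin r → ℤ)} {l : List (Fin r → ℤ)}
    (hl : ∀ β ∈ l, β ∈ P.simple) (hp : (l.map (reflL P)).prod = σ) :
    len P σ ≤ l.length :=
  Nat.sInf_le ⟨l, hl, hp, rfl⟩

lemma len_one (P : RootSystemData r) : len P (1 : Module.End ℤ (Fin r → ℤ)) = 0 :=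
  Nat.sInf_eq_zero.2 (Or.inl ⟨[], by simp, by simp, rfl⟩)

lemma exists_reduced (P : RootSystemData r)
    (hex : ∀ σ ∈ weyl P, ∃ l : List (Fin r → ℤ),
      (∀ β ∈ l, β ∈ P.simple) ∧ (l.map (reflL P)).prod = σ)
    {σ : Module.End ℤ (Fin r → ℤ)} (hσ : σ ∈ weyl P) :
    ∃ l : List (Fin r → ℤ), (∀ β ∈ l, β ∈ P.simple) ∧
      (l.map (reflL P)).prod = σ ∧ l.length = len P σ := by
  obtain ⟨l, h1, h2⟩ := hex σ hσ
  exact Nat.sInf_mem (⟨l.length, l, h1, h2, rfl⟩ :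
    {n | ∃ l : List (Fin r → ℤ), (∀ β ∈ l, β ∈ P.simple) ∧
      (l.map (reflL P)).prod = σ ∧ l.length = n}.Nonempty)

lemma det_word (P : RootSystemData r) {l : List (Fin r → ℤ)}
    (hl : ∀ β ∈ l, β ∈ P.simple) :
    LinearMap.det ((l.map (reflL P)).prod) = (-1) ^ l.length := by
  induction l with
  | nil => simp
  | cons α t ih =>
    have hαR : α ∈ P.R := P.pos_subset (P.simple_subset (hl α List.mem_cons_self))
    rw [List.map_cons, List.prod_cons, List.length_cons,
      show reflL P α * (t.map (reflL P)).prod = (reflL P α).comp (t.map (reflL P)).prod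
        from rfl,
      LinearMap.det_comp, det_reflL P (P.coroot_self α hαR),
      ih (fun β hβ => hl β (List.mem_cons_of_mem _ hβ)), pow_succ]
    ring

lemma neg_one_pow_ne (n : ℕ) : ((-1 : ℤ)) ^ (n + 1) ≠ (-1) ^ n := by
  rcases Nat.even_or_odd n with h | h
  · rw [h.neg_one_pow, Odd.neg_one_pow (h.add_one)]; norm_num
  · rw [h.neg_one_pow, Even.neg_one_pow (h.add_one)]; norm_num

lemma parity (P : RootSystemData r)
    (hex : ∀ σ ∈ weyl P, ∃ l : List (Fin r → ℤ),
      (∀ β ∈ l, β ∈ P.simple) ∧ (l.map (reflL P)).prod = σ)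
    {σ : Module.End ℤ (Fin r → ℤ)} (hσ : σ ∈ weyl P) {l : List (Fin r → ℤ)}
    (hl : ∀ β ∈ l, β ∈ P.simple) (hp : (l.map (reflL P)).prod = σ) :
    ((-1 : ℤ)) ^ l.length = (-1) ^ (len P σ) := by
  obtain ⟨m, hm1, hm2, hm3⟩ := exists_reduced P hex hσ
  rw [← hm3, ← det_word P hm1, ← det_word P hl, hp, hm2]

lemma foldr_comp_eq {A : Type*} (L : List (A → A)) (g : A → A) :
    L.foldr (· ∘ ·) g = (L.foldr (· ∘ ·) id) ∘ g := by
  induction L with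
  | nil => rfl
  | cons f t ih => simp only [List.foldr_cons, ih]; rfl

end Aux2
section Key

open MvPolynomial

variable {r : ℕ}

lemma key_zero (P : RootSystemData r)
    (hex : ∀ σ ∈ weyl P, ∃ l : List (Fin r → ℤ),
      (∀ β ∈ l, β ∈ P.simple) ∧ (l.map (reflL P)).prod = σ)
    (D : (Fin r → ℤ) → MvPolynomial (Fin r) ℤ → MvPolynomial (Fin r) ℤ)
    (hD : ∀ α ∈ P.R, ∀ u, lin α * D α u = u - act (reflL P α) u)
    (Dw : Module.End ℤ (Fin r → ℤ) →
      MvPolynomial (Fin r) ℤ → MvPolynomial (Fin r) ℤ)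
    (hDw : ∀ (σ : Module.End ℤ (Fin r → ℤ)) (l : List (Fin r → ℤ)),
      (∀ β ∈ l, β ∈ P.simple) → (l.map (reflL P)).prod = σ → l.length = len P σ →
      Dw σ = (l.map D).foldr (· ∘ ·) id) :
    ∀ l : List (Fin r → ℤ), (∀ β ∈ l, β ∈ P.simple) →
      l.length ≠ len P ((l.map (reflL P)).prod) →
      ∀ u, ((l.map D).foldr (· ∘ ·) id) u = 0 := by
  intro l
  induction l with
  | nil =>
      intro _ h
      exfalso
      apply h
      simp only [List.map_nil, List.prod_nil, List.length_nil]
      exact (len_one P).symm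
  | cons α t ih =>
      intro hl hlen u
      have hα : α ∈ P.simple := hl α List.mem_cons_self
      have hαR : α ∈ P.R := P.pos_subset (P.simple_subset hα)
      have hc2 : P.coroot α α = 2 := P.coroot_self α hαR
      have ht : ∀ β ∈ t, β ∈ P.simple := fun β hβ => hl β (List.mem_cons_of_mem _ hβ)
      set σ' : Module.End ℤ (Fin r → ℤ) := (t.map (reflL P)).prod with hσ'
      have hgoal : (((α :: t).map D).foldr (· ∘ ·) id) u
          = D α (((t.map D).foldr (· ∘ ·) id) u) := rfl
      rw [hgoal]
      by_cases hred : t.length = len P σ'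
      · -- t is reduced
        set σ : Module.End ℤ (Fin r → ℤ) := reflL P α * σ' with hσdef
        have hprod : ((α :: t).map (reflL P)).prod = σ := by
          simp [hσdef, hσ']
        have hσ'eq : reflL P α * σ = σ' := by
          rw [hσdef, ← mul_assoc, reflL_sq P hc2, one_mul]
        have hσw : σ ∈ weyl P := by
          rw [← hprod]; exact word_mem_weyl P hl
        have hσ'w : σ' ∈ weyl P := word_mem_weyl P ht
        have hlen' : t.length + 1 ≠ len P σ := by
          intro h; exact hlen (by rw [List.length_cons, h, hprod])
        have hle : len P σ ≤ t.length + 1 := by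
          have := len_le P hl hprod
          simpa using this
        have hpar : ((-1 : ℤ)) ^ (t.length + 1) = (-1) ^ (len P σ) := by
          have := parity P hex hσw (l := α :: t) hl hprod
          simpa using this
        have hnet : len P σ ≠ t.length := by
          intro h
          rw [h] at hpar
          exact neg_one_pow_ne t.length hpar
        obtain ⟨m, hm1, hm2, hm3⟩ := exists_reduced P hex hσw
        have hword : ((α :: m).map (reflL P)).prod = σ' := by
          rw [List.map_cons, List.prod_cons, hm2, hσ'eq]
        have hle2 : len P σ' ≤ m.length + 1 := by
          have := len_le P (l := α :: m)
            (fun β hβ => by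
              rcases List.mem_cons.1 hβ with h | h
              · rwa [h]
              · exact hm1 β h) hword
          simpa using this
        have hmlen : m.length + 1 = len P σ' := by omega
        have hDσ'1 : Dw σ' = (t.map D).foldr (· ∘ ·) id := hDw σ' t ht rfl hred
        have hDσ'2 : Dw σ' = ((α :: m).map D).foldr (· ∘ ·) id :=
          hDw σ' (α :: m)
            (fun β hβ => by
              rcases List.mem_cons.1 hβ with h | h
              · rwa [h]
              · exact hm1 β h) hword (by simpa using hmlen)
        have : ((t.map D).foldr (· ∘ ·) id) u
            = D α (((m.map D).foldr (· ∘ ·) id) u) := by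
          rw [← hDσ'1, hDσ'2]; rfl
        rw [this]
        exact D_sq P D hD hαR _
      · rw [ih ht hred u]
        exact D_zero P D hD hαR

end Key
/-- Let `∂_w = ∂_{α_1} ⋯ ∂_{α_k}` for any reduced word
`w = s_{α_1} ⋯ s_{α_k}` in simple reflections (the hypothesis `hDw` states that
`Dw` is given by this recipe for every reduced word, so in particular `∂_w` is
independent of the chosen reduced decomposition).  Then for `w, w'` in the Weyl
group: `∂_w ∂_{w'} = ∂_{ww'}` if `ℓ(ww') = ℓ(w) + ℓ(w')`, and `∂_w ∂_{w'} = 0`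
otherwise. -/
theorem statement7 {r : ℕ} (P : RootSystemData r)
    (hsimp : weyl P = Submonoid.closure ((fun β => reflL P β) '' ↑P.simple))
    (hex : ∀ σ ∈ weyl P, ∃ l : List (Fin r → ℤ),
      (∀ β ∈ l, β ∈ P.simple) ∧ (l.map (reflL P)).prod = σ)
    (D : (Fin r → ℤ) → MvPolynomial (Fin r) ℤ → MvPolynomial (Fin r) ℤ)
    (hD : ∀ α ∈ P.R, ∀ u, lin α * D α u = u - act (reflL P α) u)
    (Dw : Module.End ℤ (Fin r → ℤ) →
      MvPolynomial (Fin r) ℤ → MvPolynomial (Fin r) ℤ)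
    (hDw : ∀ (σ : Module.End ℤ (Fin r → ℤ)) (l : List (Fin r → ℤ)),
      (∀ β ∈ l, β ∈ P.simple) → (l.map (reflL P)).prod = σ → l.length = len P σ →
      Dw σ = (l.map D).foldr (· ∘ ·) id)
    (w w' : Module.End ℤ (Fin r → ℤ)) (hw : w ∈ weyl P) (hw' : w' ∈ weyl P) :
    (len P (w * w') = len P w + len P w' → Dw (w * w') = Dw w ∘ Dw w') ∧
    (len P (w * w') ≠ len P w + len P w' → ∀ u, Dw w (Dw w' u) = 0) := by
  obtain ⟨lw, ha1, ha2, ha3⟩ := exists_reduced P hex hw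
  obtain ⟨lw', hb1, hb2, hb3⟩ := exists_reduced P hex hw'
  have hword : ∀ β ∈ lw ++ lw', β ∈ P.simple := fun β hβ => by
    rcases List.mem_append.1 hβ with h | h
    exacts [ha1 β h, hb1 β h]
  have hprod : ((lw ++ lw').map (reflL P)).prod = w * w' := by
    rw [List.map_append, List.prod_append, ha2, hb2]
  have hsplit : (((lw ++ lw').map D).foldr (· ∘ ·) id)
      = ((lw.map D).foldr (· ∘ ·) id) ∘ ((lw'.map D).foldr (· ∘ ·) id) := by
    rw [List.map_append, List.foldr_append, foldr_comp_eq]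
  have hDww : Dw w = (lw.map D).foldr (· ∘ ·) id := hDw w lw ha1 ha2 ha3
  have hDww' : Dw w' = (lw'.map D).foldr (· ∘ ·) id := hDw w' lw' hb1 hb2 hb3
  constructor
  · intro h
    have hlen : (lw ++ lw').length = len P (w * w') := by
      rw [List.length_append, ha3, hb3, h]
    rw [hDw (w * w') (lw ++ lw') hword hprod hlen, hsplit, hDww, hDww']
  · intro h u
    have hlen : (lw ++ lw').length ≠ len P (((lw ++ lw').map (reflL P)).prod) := by
      rw [hprod, List.length_append, ha3, hb3]
      exact fun hc => h hc.symm
    have h0 := key_zero P hex D hD Dw hDw (lw ++ lw') hword hlen u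
    rw [hsplit] at h0
    rw [hDww, hDww']
    exact h0
end

section
/- Let G = U(l+1) with diagonal maximal torus T and characters ε_1,…,ε_{l+1}, W = S_{l+1} acting by permutations. Let 𝔖 = ε_1^l ε_2^{l-1} ⋯ ε_l and 𝔖_w = ∂_{w^{-1}w_0}(𝔖) the Schubert polynomials. Then the Schubert polynomials (𝔖_w)_{w∈W} form a basis of S = ℤ[ε_1,…,ε_{l+1}] as a module over the ring S^W of symmetric polynomials. -/
open MvPolynomial

/-- The adjacent transposition `s_i = (i, i+1)` in `S_{l+1}`. -/
def adjSwap {l : ℕ} (i : Fin l) : Equiv.Perm (Fin (l + 1)) :=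
  Equiv.swap i.castSucc i.succ

/-- The length of a permutation: the minimal length of a word in adjacent
transpositions representing it. -/
noncomputable def permLen {l : ℕ} (w : Equiv.Perm (Fin (l + 1))) : ℕ :=
  sInf {n | ∃ t : List (Fin l), (t.map adjSwap).prod = w ∧ t.length = n}


namespace St18

abbrev PP (l : ℕ) := MvPolynomial (Fin (l + 1)) ℤ

variable {l : ℕ}

/-- number of inversions -/
def pinv (w : Equiv.Perm (Fin (l + 1))) : ℕ :=
  (Finset.univ.filter fun p : Fin (l + 1) × Fin (l + 1) => p.1 < p.2 ∧ w p.2 < w p.1).card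

lemma swap_lt_iff (i : Fin l) {x y : Fin (l + 1)} (h : x < y) :
    Equiv.swap i.castSucc i.succ y < Equiv.swap i.castSucc i.succ x ↔
      x = i.castSucc ∧ y = i.succ := by
  have hc : (i.castSucc : Fin (l+1)).1 = i.1 := rfl
  have hs : (i.succ : Fin (l+1)).1 = i.1 + 1 := rfl
  simp only [Equiv.swap_apply_def]
  split_ifs with h1 h2 h3 h4 <;>
    simp only [Fin.lt_def, Fin.ext_iff, hc, hs] at * <;> omega

lemma swap_lt_iff' (i : Fin l) {x y : Fin (l + 1)} (h : x < y) :
    Equiv.swap i.castSucc i.succ x < Equiv.swap i.castSucc i.succ y ↔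
      ¬(x = i.castSucc ∧ y = i.succ) := by
  rcases lt_trichotomy (Equiv.swap i.castSucc i.succ x) (Equiv.swap i.castSucc i.succ y) with
    h1 | h1 | h1
  · simp only [h1, true_iff]
    intro hc
    have := (swap_lt_iff i h).mpr hc
    exact absurd h1 (not_lt.2 this.le)
  · exact absurd (Equiv.injective _ h1) (ne_of_lt h)
  · simp only [not_lt.2 h1.le, false_iff, not_not]
    exact (swap_lt_iff i h).mp h1

lemma castSucc_lt_succ (i : Fin l) : (i.castSucc : Fin (l+1)) < i.succ := Fin.castSucc_lt_succ (i := i)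

lemma pinv_asc (i : Fin l) (z : Equiv.Perm (Fin (l + 1)))
    (h : z⁻¹ i.castSucc < z⁻¹ i.succ) :
    pinv (adjSwap i * z) = pinv z + 1 := by
  classical
  set a := z⁻¹ i.castSucc with ha
  set b := z⁻¹ i.succ with hb
  have hza : z a = i.castSucc := z.apply_symm_apply _
  have hzb : z b = i.succ := z.apply_symm_apply _
  have hset : (Finset.univ.filter fun p : Fin (l+1) × Fin (l+1) =>
        p.1 < p.2 ∧ (adjSwap i * z) p.2 < (adjSwap i * z) p.1)
      = insert (a, b) (Finset.univ.filter fun p : Fin (l+1) × Fin (l+1) =>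
        p.1 < p.2 ∧ z p.2 < z p.1) := by
    ext p
    simp only [Finset.mem_insert, Finset.mem_filter, Finset.mem_univ, true_and]
    simp only [Equiv.Perm.mul_apply, adjSwap]
    constructor
    · rintro ⟨hlt, hinv⟩
      rcases lt_trichotomy (z p.1) (z p.2) with h1 | h1 | h1
      · left
        obtain ⟨e1, e2⟩ := (swap_lt_iff i h1).mp hinv
        have : p.1 = a := by rw [ha, ← e1]; simp
        have h2 : p.2 = b := by rw [hb, ← e2]; simp
        exact Prod.ext this h2
      · exact absurd (z.injective h1) (ne_of_lt hlt)
      · right; exact ⟨hlt, h1⟩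
    · rintro (rfl | ⟨hlt, hinv⟩)
      · refine ⟨h, ?_⟩
        show Equiv.swap _ _ (z b) < Equiv.swap _ _ (z a)
        rw [hza, hzb, Equiv.swap_apply_left, Equiv.swap_apply_right]
        exact castSucc_lt_succ i
      · refine ⟨hlt, ?_⟩
        rw [swap_lt_iff' i hinv]
        rintro ⟨e1, e2⟩
        have h2 : p.2 = a := by rw [ha, ← e1]; simp
        have h1 : p.1 = b := by rw [hb, ← e2]; simp
        rw [h1, h2] at hlt
        exact absurd h (not_lt.2 hlt.le)
  have hnot : (a, b) ∉ (Finset.univ.filter fun p : Fin (l+1) × Fin (l+1) =>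
      p.1 < p.2 ∧ z p.2 < z p.1) := by
    simp only [Finset.mem_filter, Finset.mem_univ, true_and, not_and]
    intro _
    rw [hza, hzb]
    exact not_lt.2 (castSucc_lt_succ i).le
  unfold pinv
  rw [hset, Finset.card_insert_of_notMem hnot]

lemma pinv_desc (i : Fin l) (z : Equiv.Perm (Fin (l + 1)))
    (h : z⁻¹ i.succ < z⁻¹ i.castSucc) :
    pinv z = pinv (adjSwap i * z) + 1 := by
  have key : adjSwap i * (adjSwap i * z) = z := by
    rw [← mul_assoc, adjSwap, Equiv.swap_mul_self, one_mul]
  have h' : (adjSwap i * z)⁻¹ i.castSucc < (adjSwap i * z)⁻¹ i.succ := by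
    have e1 : (adjSwap i * z)⁻¹ i.castSucc = z⁻¹ i.succ := by
      simp [adjSwap, mul_inv_rev, Equiv.Perm.mul_apply, Equiv.swap_inv, Equiv.swap_apply_left]
    have e2 : (adjSwap i * z)⁻¹ i.succ = z⁻¹ i.castSucc := by
      simp [adjSwap, mul_inv_rev, Equiv.Perm.mul_apply, Equiv.swap_inv, Equiv.swap_apply_right]
    rw [e1, e2]; exact h
  have := pinv_asc i (adjSwap i * z) h'
  rw [key] at this
  rw [this]

lemma adjSwap_mul_self (i : Fin l) : adjSwap i * adjSwap i = 1 := Equiv.swap_mul_self _ _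

lemma le_apply_of_strictMono (z : Equiv.Perm (Fin (l + 1)))
    (h : StrictMono (⇑z)) : ∀ x, x ≤ z x := by
  by_contra h'
  push_neg at h'
  obtain ⟨x, hx⟩ := h'
  classical
  have hne : (Finset.univ.filter fun y : Fin (l + 1) => z y < y).Nonempty :=
    ⟨x, by simp [hx]⟩
  set x0 := (Finset.univ.filter fun y : Fin (l + 1) => z y < y).min' hne with hx0
  have hmem := (Finset.univ.filter fun y : Fin (l + 1) => z y < y).min'_mem hne
  rw [Finset.mem_filter] at hmem
  have hlt : z x0 < x0 := hmem.2
  have : z (z x0) < z x0 := h hlt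
  have hmem2 : z x0 ∈ Finset.univ.filter fun y : Fin (l + 1) => z y < y := by
    simp [this]
  exact absurd hlt (not_lt.2 (Finset.min'_le _ _ hmem2))

lemma strictMono_perm_eq_one (z : Equiv.Perm (Fin (l + 1)))
    (h : StrictMono (⇑z)) : z = 1 := by
  have hinv : StrictMono (⇑(z⁻¹)) := by
    intro a b hab
    rcases lt_trichotomy (z⁻¹ a) (z⁻¹ b) with h1 | h1 | h1
    · exact h1
    · exact absurd ((z⁻¹).injective h1) (ne_of_lt hab)
    · have := h h1
      simp only [Equiv.Perm.coe_inv, Equiv.apply_symm_apply] at this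
      exact absurd hab (not_lt.2 this.le)
  refine Equiv.ext fun x => ?_
  have h1 := le_apply_of_strictMono z h x
  have h2 := le_apply_of_strictMono z⁻¹ hinv (z x)
  simp only [Equiv.Perm.coe_inv, Equiv.symm_apply_apply] at h2
  simp only [Equiv.Perm.one_apply]
  exact le_antisymm h2 h1

lemma pinv_one : pinv (1 : Equiv.Perm (Fin (l + 1))) = 0 := by
  unfold pinv
  rw [Finset.card_eq_zero, Finset.filter_eq_empty_iff]
  rintro p -
  rintro ⟨h1, h2⟩
  simp only [Equiv.Perm.one_apply] at h2
  exact absurd h1 (not_lt.2 h2.le)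

lemma eq_one_of_pinv_eq_zero (z : Equiv.Perm (Fin (l + 1))) (h : pinv z = 0) : z = 1 := by
  have key : StrictMono (z : Fin (l + 1) → Fin (l + 1)) := by
    intro x y hxy
    rcases lt_trichotomy (z x) (z y) with h1 | h1 | h1
    · exact h1
    · exact absurd (z.injective h1) (ne_of_lt hxy)
    · exfalso
      have : (x, y) ∈ (Finset.univ.filter fun p : Fin (l + 1) × Fin (l + 1) =>
          p.1 < p.2 ∧ z p.2 < z p.1) := by
        simp only [Finset.mem_filter, Finset.mem_univ, true_and]
        exact ⟨hxy, h1⟩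
      rw [pinv, Finset.card_eq_zero] at h
      simp [h] at this
  exact strictMono_perm_eq_one z key

lemma exists_descent (z : Equiv.Perm (Fin (l + 1))) (h : z ≠ 1) :
    ∃ i : Fin l, z⁻¹ i.succ < z⁻¹ i.castSucc := by
  by_contra hc
  push_neg at hc
  have key : StrictMono (⇑(z⁻¹)) := by
    rw [Fin.strictMono_iff_lt_succ]
    intro i
    rcases lt_trichotomy (z⁻¹ i.castSucc) (z⁻¹ i.succ) with h1 | h1 | h1
    · exact h1
    · exact absurd ((z⁻¹).injective h1) (Fin.castSucc_lt_succ (i := i)).ne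
    · exact absurd h1 (not_lt.2 (hc i))
  have := strictMono_perm_eq_one z⁻¹ key
  exact h (by rw [← inv_inv z, this, inv_one])

lemma exists_word (z : Equiv.Perm (Fin (l + 1))) :
    ∃ t : List (Fin l), (t.map adjSwap).prod = z ∧ t.length = pinv z := by
  generalize hm : pinv z = m
  induction m using Nat.strong_induction_on generalizing z with
  | _ m ih =>
    rcases Nat.eq_zero_or_pos m with rfl | hpos
    · exact ⟨[], by rw [List.map_nil, List.prod_nil,
        eq_one_of_pinv_eq_zero z hm], rfl⟩
    · have hz : z ≠ 1 := fun hz => by rw [hz, pinv_one] at hm; omega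
      obtain ⟨i, hi⟩ := exists_descent z hz
      have hd := pinv_desc i z hi
      rw [hm] at hd
      obtain ⟨t', ht'p, ht'l⟩ := ih (pinv (adjSwap i * z)) (by omega) (adjSwap i * z) rfl
      refine ⟨i :: t', ?_, ?_⟩
      · rw [List.map_cons, List.prod_cons, ht'p, ← mul_assoc, adjSwap_mul_self, one_mul]
      · simp only [List.length_cons, ht'l]; omega

lemma pinv_le_length (t : List (Fin l)) : pinv ((t.map adjSwap).prod) ≤ t.length := by
  induction t with
  | nil => simp [pinv_one]
  | cons i t ih =>
    rw [List.map_cons, List.prod_cons, List.length_cons]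
    set w := (t.map adjSwap).prod
    rcases lt_trichotomy (w⁻¹ i.castSucc) (w⁻¹ i.succ) with h1 | h1 | h1
    · rw [pinv_asc i w h1]; omega
    · exact absurd ((w⁻¹).injective h1) (Fin.castSucc_lt_succ (i := i)).ne
    · have := pinv_desc i w h1; omega

lemma permLen_eq_pinv (z : Equiv.Perm (Fin (l + 1))) : permLen z = pinv z := by
  obtain ⟨t, htp, htl⟩ := exists_word z
  refine le_antisymm (Nat.sInf_le ⟨t, htp, htl⟩) (le_csInf ⟨pinv z, t, htp, htl⟩ ?_)
  rintro n ⟨s, hsp, hsl⟩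
  rw [← hsl, ← hsp]
  exact pinv_le_length s

lemma exists_reduced (z : Equiv.Perm (Fin (l + 1))) :
    ∃ t : List (Fin l), (t.map adjSwap).prod = z ∧ t.length = permLen z := by
  rw [permLen_eq_pinv]; exact exists_word z

def Npairs (l : ℕ) : ℕ :=
  (Finset.univ.filter fun p : Fin (l + 1) × Fin (l + 1) => p.1 < p.2).card

lemma pinv_rev_mul (z : Equiv.Perm (Fin (l + 1))) :
    pinv (Fin.revPerm * z) + pinv z = Npairs l := by
  classical
  have key : (Finset.univ.filter fun p : Fin (l + 1) × Fin (l + 1) =>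
      p.1 < p.2 ∧ ((Fin.revPerm : Equiv.Perm (Fin (l + 1))) * z) p.2 <
        ((Fin.revPerm : Equiv.Perm (Fin (l + 1))) * z) p.1)
      = ((Finset.univ.filter fun p : Fin (l + 1) × Fin (l + 1) => p.1 < p.2).filter
        fun p => ¬ z p.2 < z p.1) := by
    ext p
    simp only [Finset.mem_filter, Finset.mem_univ, true_and, Equiv.Perm.mul_apply,
      Fin.revPerm_apply, Fin.rev_lt_rev, and_assoc]
    constructor
    · rintro ⟨h1, h2⟩; exact ⟨h1, not_lt.2 h2.le⟩
    · rintro ⟨h1, h2⟩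
      refine ⟨h1, ?_⟩
      rcases lt_trichotomy (z p.1) (z p.2) with h3 | h3 | h3
      · exact h3
      · exact absurd (z.injective h3) (ne_of_lt h1)
      · exact absurd h3 h2
  have key2 : (Finset.univ.filter fun p : Fin (l + 1) × Fin (l + 1) =>
      p.1 < p.2 ∧ z p.2 < z p.1)
      = ((Finset.univ.filter fun p : Fin (l + 1) × Fin (l + 1) => p.1 < p.2).filter
        fun p => z p.2 < z p.1) := by
    rw [Finset.filter_filter]
  rw [pinv, pinv, key, key2, add_comm]
  exact Finset.card_filter_add_card_filter_not _

lemma pinv_le_Npairs (z : Equiv.Perm (Fin (l + 1))) : pinv z ≤ Npairs l := by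
  have := pinv_rev_mul z; omega

lemma pinv_revPerm : pinv (Fin.revPerm : Equiv.Perm (Fin (l + 1))) = Npairs l := by
  have := pinv_rev_mul (1 : Equiv.Perm (Fin (l + 1)))
  rwa [mul_one, pinv_one] at this

lemma revPerm_mul_revPerm :
    (Fin.revPerm : Equiv.Perm (Fin (l + 1))) * Fin.revPerm = 1 := by
  ext x; simp

lemma eq_revPerm_of_pinv_eq (z : Equiv.Perm (Fin (l + 1))) (h : pinv z = Npairs l) :
    z = Fin.revPerm := by
  have h0 : pinv (Fin.revPerm * z) = 0 := by have := pinv_rev_mul z; omega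
  have := eq_one_of_pinv_eq_zero _ h0
  have : Fin.revPerm * (Fin.revPerm * z) = Fin.revPerm * 1 := by rw [this]
  rwa [← mul_assoc, revPerm_mul_revPerm, one_mul, mul_one] at this

lemma pinv_inv (z : Equiv.Perm (Fin (l + 1))) : pinv z⁻¹ = pinv z := by
  classical
  unfold pinv
  apply Finset.card_bij' (fun p _ => ((z⁻¹ p.2 : Fin (l+1)), z⁻¹ p.1))
    (fun q _ => ((z q.2 : Fin (l+1)), z q.1))
  · rintro p hp
    simp only [Finset.mem_filter, Finset.mem_univ, true_and] at hp ⊢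
    exact ⟨hp.2, by simpa using hp.1⟩
  · rintro q hq
    simp only [Finset.mem_filter, Finset.mem_univ, true_and] at hq ⊢
    exact ⟨hq.2, by simpa using hq.1⟩
  · rintro p _; simp
  · rintro q _; simp


lemma X_sub_ne (i : Fin l) : (X i.castSucc - X i.succ : PP l) ≠ 0 :=
  sub_ne_zero.2 (fun h => (Fin.castSucc_lt_succ (i := i)).ne (X_injective h))

lemma adjSwap_apply_castSucc (i : Fin l) : adjSwap i i.castSucc = i.succ :=
  Equiv.swap_apply_left _ _

lemma adjSwap_apply_succ (i : Fin l) : adjSwap i i.succ = i.castSucc :=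
  Equiv.swap_apply_right _ _

lemma rename_adjSwap_adjSwap (i : Fin l) (u : PP l) :
    rename (⇑(adjSwap i)) (rename (⇑(adjSwap i)) u) = u := by
  rw [rename_rename]
  have : (⇑(adjSwap i)) ∘ (⇑(adjSwap i)) = id := by
    funext x; simp [adjSwap]
  rw [this, rename_id, AlgHom.id_apply]

section Ops
variable (D : Fin l → PP l → PP l)
variable (hD : ∀ (i : Fin l) (u : PP l),
  (X i.castSucc - X i.succ) * D i u = u - rename (adjSwap i) u)
include hD

lemma D_add (i : Fin l) (u v : PP l) : D i (u + v) = D i u + D i v := by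
  apply mul_left_cancel₀ (X_sub_ne i)
  rw [hD, mul_add, hD, hD, map_add]
  ring

lemma D_zero (i : Fin l) : D i 0 = 0 := by
  apply mul_left_cancel₀ (X_sub_ne i)
  rw [hD, map_zero, mul_zero, sub_zero]

lemma D_sub (i : Fin l) (u v : PP l) : D i (u - v) = D i u - D i v := by
  apply mul_left_cancel₀ (X_sub_ne i)
  rw [hD, mul_sub, hD, hD, map_sub]
  ring

lemma rename_D (i : Fin l) (u : PP l) :
    rename (⇑(adjSwap i)) (D i u) = D i u := by
  apply mul_left_cancel₀ (neg_ne_zero.2 (X_sub_ne i))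
  have key := congrArg (rename (⇑(adjSwap i))) (hD i u)
  rw [map_mul, map_sub, map_sub, rename_X, rename_X, adjSwap_apply_castSucc,
    adjSwap_apply_succ, rename_adjSwap_adjSwap] at key
  calc -(X i.castSucc - X i.succ) * rename (⇑(adjSwap i)) (D i u)
      = (X i.succ - X i.castSucc) * rename (⇑(adjSwap i)) (D i u) := by ring
    _ = rename (⇑(adjSwap i)) u - u := key
    _ = -(u - rename (⇑(adjSwap i)) u) := by ring
    _ = -((X i.castSucc - X i.succ) * D i u) := by rw [hD]
    _ = -(X i.castSucc - X i.succ) * D i u := by ring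

lemma D_of_invariant (i : Fin l) (u : PP l)
    (h : rename (⇑(adjSwap i)) u = u) : D i u = 0 := by
  apply mul_left_cancel₀ (X_sub_ne i)
  rw [hD, h, sub_self, mul_zero]

lemma D_D (i : Fin l) (u : PP l) : D i (D i u) = 0 :=
  D_of_invariant D hD i _ (rename_D D hD i u)

lemma D_mul_inv (i : Fin l) (c u : PP l)
    (hc : rename (⇑(adjSwap i)) c = c) : D i (c * u) = c * D i u := by
  apply mul_left_cancel₀ (X_sub_ne i)
  rw [hD]
  calc c * u - rename (⇑(adjSwap i)) (c * u)
      = c * u - rename (⇑(adjSwap i)) c * rename (⇑(adjSwap i)) u := by rw [map_mul]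
    _ = c * (u - rename (⇑(adjSwap i)) u) := by rw [hc]; ring
    _ = c * ((X i.castSucc - X i.succ) * D i u) := by rw [hD]
    _ = (X i.castSucc - X i.succ) * (c * D i u) := by ring

lemma D_X_mul (i : Fin l) (g : PP l)
    (hg : rename (⇑(adjSwap i)) g = g) : D i (X i.castSucc * g) = g := by
  apply mul_left_cancel₀ (X_sub_ne i)
  rw [hD, map_mul, rename_X, adjSwap_apply_castSucc, hg]
  ring

end Ops

/-- composite of divided differences along a word -/
def dcomp (D : Fin l → PP l → PP l) (t : List (Fin l)) : PP l → PP l :=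
  (t.map D).foldr (· ∘ ·) id

@[simp] lemma dcomp_nil (D : Fin l → PP l → PP l) : dcomp D [] = id := rfl

@[simp] lemma dcomp_cons (D : Fin l → PP l → PP l) (i : Fin l) (t : List (Fin l)) :
    dcomp D (i :: t) = D i ∘ dcomp D t := rfl

lemma dcomp_append (D : Fin l → PP l → PP l) (t1 t2 : List (Fin l)) :
    dcomp D (t1 ++ t2) = dcomp D t1 ∘ dcomp D t2 := by
  induction t1 with
  | nil => simp
  | cons i t ih => simp [ih, Function.comp_assoc]

section Ops2
variable (D : Fin l → PP l → PP l)
variable (hD : ∀ (i : Fin l) (u : PP l),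
  (X i.castSucc - X i.succ) * D i u = u - rename (adjSwap i) u)
include hD

lemma dcomp_zero (t : List (Fin l)) : dcomp D t 0 = 0 := by
  induction t with
  | nil => rfl
  | cons i t ih => simp [ih, D_zero D hD]

lemma dcomp_add (t : List (Fin l)) (u v : PP l) :
    dcomp D t (u + v) = dcomp D t u + dcomp D t v := by
  induction t generalizing u v with
  | nil => rfl
  | cons i t ih => simp [ih, D_add D hD]

lemma dcomp_sub (t : List (Fin l)) (u v : PP l) :
    dcomp D t (u - v) = dcomp D t u - dcomp D t v := by
  induction t generalizing u v with
  | nil => rfl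
  | cons i t ih => simp [ih, D_sub D hD]

lemma dcomp_mul_symm (t : List (Fin l)) (c u : PP l) (hc : c.IsSymmetric) :
    dcomp D t (c * u) = c * dcomp D t u := by
  induction t generalizing u with
  | nil => rfl
  | cons i t ih => simp [ih, D_mul_inv D hD i c _ (hc (adjSwap i))]

lemma dcomp_sum {α : Type*} (t : List (Fin l)) (s : Finset α) (f : α → PP l) :
    dcomp D t (∑ a ∈ s, f a) = ∑ a ∈ s, dcomp D t (f a) := by
  classical
  induction s using Finset.induction_on with
  | empty => simp [dcomp_zero D hD]
  | insert _ _ hni ih =>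
    rw [Finset.sum_insert hni, Finset.sum_insert hni, dcomp_add D hD, ih]

lemma dcomp_symm_zero (t : List (Fin l)) (u : PP l) (ht : t ≠ [])
    (hu : ∀ i : Fin l, rename (⇑(adjSwap i)) u = u) : dcomp D t u = 0 := by
  induction t with
  | nil => exact absurd rfl ht
  | cons i t ih =>
    rcases List.eq_nil_or_concat t with rfl | _
    · simpa using D_of_invariant D hD i u (hu i)
    · have ht' : t ≠ [] := by rintro rfl; simp_all
      simp [ih ht', D_zero D hD]
end Ops2

lemma pinv_mul_le (a b : Equiv.Perm (Fin (l + 1))) : pinv (a * b) ≤ pinv a + pinv b := by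
  obtain ⟨ta, hta, hla⟩ := exists_word a
  obtain ⟨tb, htb, hlb⟩ := exists_word b
  have : ((ta ++ tb).map adjSwap).prod = a * b := by
    rw [List.map_append, List.prod_append, hta, htb]
  have h := pinv_le_length (ta ++ tb)
  rw [this, List.length_append, hla, hlb] at h
  exact h

lemma pinv_adj_cases (i : Fin l) (y : Equiv.Perm (Fin (l + 1))) :
    pinv (adjSwap i * y) = pinv y + 1 ∨ pinv y = pinv (adjSwap i * y) + 1 := by
  rcases lt_trichotomy (y⁻¹ i.castSucc) (y⁻¹ i.succ) with h | h | h
  · exact Or.inl (pinv_asc i y h)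
  · exact absurd ((y⁻¹).injective h) (Fin.castSucc_lt_succ (i := i)).ne
  · exact Or.inr (pinv_desc i y h)

lemma pinv_adj_le (i : Fin l) (y : Equiv.Perm (Fin (l + 1))) :
    pinv (adjSwap i * y) ≤ pinv y + 1 := by
  rcases pinv_adj_cases i y with h | h <;> omega

section DwSec
variable (D : Fin l → PP l → PP l)
variable (hD : ∀ (i : Fin l) (u : PP l),
  (X i.castSucc - X i.succ) * D i u = u - rename (adjSwap i) u)
variable (Dw : Equiv.Perm (Fin (l + 1)) → PP l → PP l)
variable (hDw : ∀ (w : Equiv.Perm (Fin (l + 1))) (t : List (Fin l)),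
  (t.map adjSwap).prod = w → t.length = permLen w →
  Dw w = (t.map D).foldr (· ∘ ·) id)
variable (S : PP l)

include hDw in
lemma Dw_eq_dcomp (w : Equiv.Perm (Fin (l + 1))) (t : List (Fin l))
    (h1 : (t.map adjSwap).prod = w) (h2 : t.length = pinv w) : Dw w = dcomp D t :=
  hDw w t h1 (by rw [permLen_eq_pinv]; exact h2)

include hDw in
lemma Dw_one : Dw 1 = id := by
  have := Dw_eq_dcomp D Dw hDw 1 [] (by simp) (by simp [pinv_one])
  simpa using this

include hD hDw in
lemma Dw_adj_asc (i : Fin l) (y : Equiv.Perm (Fin (l + 1)))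
    (h : pinv (adjSwap i * y) = pinv y + 1) (u : PP l) :
    D i (Dw y u) = Dw (adjSwap i * y) u := by
  obtain ⟨ty, hty, hly⟩ := exists_word y
  have h1 : Dw y = dcomp D ty := Dw_eq_dcomp D Dw hDw y ty hty hly
  have h2 : Dw (adjSwap i * y) = dcomp D (i :: ty) := by
    apply Dw_eq_dcomp D Dw hDw
    · rw [List.map_cons, List.prod_cons, hty]
    · rw [List.length_cons, hly, h]
  rw [h1, h2]
  rfl

include hD hDw in
lemma Dw_adj_desc (i : Fin l) (y : Equiv.Perm (Fin (l + 1)))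
    (h : pinv y = pinv (adjSwap i * y) + 1) (u : PP l) :
    D i (Dw y u) = 0 := by
  obtain ⟨ty, hty, hly⟩ := exists_word (adjSwap i * y)
  have hy : Dw y = dcomp D (i :: ty) := by
    apply Dw_eq_dcomp D Dw hDw
    · rw [List.map_cons, List.prod_cons, hty, ← mul_assoc, adjSwap_mul_self, one_mul]
    · rw [List.length_cons, hly, ← h]
  rw [hy]
  exact D_D D hD i _

include hD hDw in
lemma dcomp_Dw_S (t : List (Fin l)) (z : Equiv.Perm (Fin (l + 1)))
    (ht : t.length = pinv ((t.map adjSwap).prod)) :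
    dcomp D t (Dw z S) =
      if pinv ((t.map adjSwap).prod * z) = t.length + pinv z
      then Dw ((t.map adjSwap).prod * z) S else 0 := by
  induction t with
  | nil =>
    simp only [List.map_nil, List.prod_nil, one_mul, List.length_nil, zero_add, if_pos rfl]
    rfl
  | cons i t ih =>
    have hprod : ((i :: t).map adjSwap).prod = adjSwap i * (t.map adjSwap).prod := by
      rw [List.map_cons, List.prod_cons]
    set v' := (t.map adjSwap).prod with hv'
    have hred : t.length = pinv v' := by
      have h1 := pinv_le_length t
      rw [← hv'] at h1
      have h2 : pinv (adjSwap i * v') ≤ pinv v' + 1 := pinv_adj_le i v'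
      rw [hprod] at ht
      simp only [List.length_cons] at ht
      omega
    have IH := ih hred
    rw [hprod, List.length_cons]
    by_cases hcond : pinv (v' * z) = t.length + pinv z
    · rw [if_pos hcond] at IH
      rw [dcomp_cons, Function.comp_apply, IH]
      have hassoc : adjSwap i * v' * z = adjSwap i * (v' * z) := mul_assoc _ _ _
      rcases pinv_adj_cases i (v' * z) with hc | hc
      · rw [Dw_adj_asc D hD Dw hDw i (v' * z) hc, hassoc, if_pos (by omega)]
      · rw [Dw_adj_desc D hD Dw hDw i (v' * z) hc, hassoc, if_neg (by omega)]
    · rw [if_neg hcond] at IH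
      rw [dcomp_cons, Function.comp_apply, IH, D_zero D hD]
      have hle : pinv (v' * z) ≤ pinv v' + pinv z := pinv_mul_le v' z
      have hle2 : pinv (adjSwap i * v' * z) ≤ pinv (v' * z) + 1 := by
        rw [mul_assoc]; exact pinv_adj_le i (v' * z)
      rw [if_neg (by omega)]

include hD hDw in
lemma Dw_Dw_S (v z : Equiv.Perm (Fin (l + 1))) :
    Dw v (Dw z S) = if pinv (v * z) = pinv v + pinv z then Dw (v * z) S else 0 := by
  obtain ⟨t, htp, htl⟩ := exists_word v
  rw [Dw_eq_dcomp D Dw hDw v t htp htl]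
  have := dcomp_Dw_S D hD Dw hDw S t z (by rw [htp, ← htl])
  rw [htp, htl] at this
  exact this

include hD hDw in
lemma E_self (z : Equiv.Perm (Fin (l + 1))) :
    Dw (Fin.revPerm * z⁻¹) (Dw z S) = Dw Fin.revPerm S := by
  have hrr : pinv ((Fin.revPerm * z⁻¹ : Equiv.Perm (Fin (l+1)))) + pinv z = Npairs l := by
    have := pinv_rev_mul (z⁻¹ : Equiv.Perm (Fin (l + 1)))
    rw [pinv_inv] at this
    exact this
  have hmul : (Fin.revPerm * z⁻¹ : Equiv.Perm (Fin (l+1))) * z = Fin.revPerm := by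
    rw [mul_assoc, inv_mul_cancel, mul_one]
  rw [Dw_Dw_S D hD Dw hDw S, hmul, if_pos]
  rw [pinv_revPerm]
  omega

include hD hDw in
lemma E_gt_zero (z y : Equiv.Perm (Fin (l + 1))) (h : pinv z < pinv y) :
    Dw (Fin.revPerm * z⁻¹) (Dw y S) = 0 := by
  have hrr : pinv ((Fin.revPerm * z⁻¹ : Equiv.Perm (Fin (l+1)))) + pinv z = Npairs l := by
    have := pinv_rev_mul (z⁻¹ : Equiv.Perm (Fin (l + 1)))
    rw [pinv_inv] at this
    exact this
  rw [Dw_Dw_S D hD Dw hDw S, if_neg]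
  have := pinv_le_Npairs ((Fin.revPerm * z⁻¹ : Equiv.Perm (Fin (l+1))) * y)
  omega

include hD hDw in
lemma E_ne_zero (z y : Equiv.Perm (Fin (l + 1))) (heq : pinv y = pinv z) (hne : y ≠ z) :
    Dw (Fin.revPerm * z⁻¹) (Dw y S) = 0 := by
  have hrr : pinv ((Fin.revPerm * z⁻¹ : Equiv.Perm (Fin (l+1)))) + pinv z = Npairs l := by
    have := pinv_rev_mul (z⁻¹ : Equiv.Perm (Fin (l + 1)))
    rw [pinv_inv] at this
    exact this
  rw [Dw_Dw_S D hD Dw hDw S, if_neg]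
  intro hc
  rw [heq] at hc
  have hc2 : pinv ((Fin.revPerm * z⁻¹ : Equiv.Perm (Fin (l+1))) * y) = Npairs l := by omega
  have := eq_revPerm_of_pinv_eq _ hc2
  have h3 : (Fin.revPerm : Equiv.Perm (Fin (l+1))) * (z⁻¹ * y) = Fin.revPerm * 1 := by
    rw [mul_one, ← mul_assoc]
    exact this
  exact hne (inv_mul_eq_one.mp (mul_left_cancel h3)).symm

end DwSec

lemma two_mul_Npairs : 2 * Npairs l + (l + 1) = (l + 1) * (l + 1) := by
  classical
  set T := Finset.univ.filter fun p : Fin (l + 1) × Fin (l + 1) => p.1 < p.2 with hT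
  set R := Finset.univ.filter fun p : Fin (l + 1) × Fin (l + 1) => ¬ p.1 < p.2 with hR
  have h1 : T.card + R.card = (l + 1) * (l + 1) := by
    rw [hT, hR, Finset.card_filter_add_card_filter_not]
    simp [Finset.card_univ]
  have h2 : R.card = (R.filter fun p => p.2 < p.1).card +
      (R.filter fun p => ¬ p.2 < p.1).card :=
    (Finset.card_filter_add_card_filter_not _).symm
  have h3 : (R.filter fun p => p.2 < p.1).card = T.card := by
    have himg : R.filter (fun p => p.2 < p.1) = T.image fun p => (p.2, p.1) := by
      ext p
      simp only [hR, hT, Finset.mem_filter, Finset.mem_univ, true_and,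
        Finset.filter_filter, Finset.mem_image]
      constructor
      · rintro ⟨h5, h6⟩
        exact ⟨(p.2, p.1), h6, rfl⟩
      · rintro ⟨q, hq, rfl⟩
        exact ⟨not_lt.2 hq.le, hq⟩
    rw [himg, Finset.card_image_of_injective _
      (fun a b h => Prod.ext (congrArg Prod.snd h) (congrArg Prod.fst h))]
  have h4 : (R.filter fun p => ¬ p.2 < p.1).card = l + 1 := by
    have : (R.filter fun p => ¬ p.2 < p.1) =
        Finset.univ.image fun x : Fin (l + 1) => (x, x) := by
      ext p
      simp only [hR, Finset.mem_filter, Finset.mem_univ, true_and, Finset.mem_image]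
      constructor
      · rintro ⟨h5, h6⟩
        have heq : p.1 = p.2 := le_antisymm (not_lt.1 h6) (not_lt.1 h5)
        exact ⟨p.1, Prod.ext rfl heq⟩
      · rintro ⟨x, rfl⟩
        simp
    rw [this, Finset.card_image_of_injective _ (fun a b h => (Prod.ext_iff.1 h).1),
      Finset.card_univ, Fintype.card_fin]
  have : Npairs l = T.card := rfl
  omega

/-- monomial with exponent vector `e` -/
noncomputable def M (e : Fin (l + 1) → ℕ) : PP l := ∏ j : Fin (l + 1), X j ^ e j

lemma rename_M (σ : Equiv.Perm (Fin (l + 1))) (e : Fin (l + 1) → ℕ) :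
    rename ⇑σ (M e) = M fun j => e (σ⁻¹ j) := by
  unfold M
  rw [map_prod]
  simp only [map_pow, rename_X]
  exact Fintype.prod_equiv σ _ _ fun x => by simp

lemma M_swap (a b : Fin (l + 1)) (e : Fin (l + 1) → ℕ) (h : e a = e b) :
    rename ⇑(Equiv.swap a b) (M e) = M e := by
  rw [rename_M]
  congr 1
  funext x
  rw [Equiv.swap_inv]
  rcases eq_or_ne x a with rfl | hxa
  · rw [Equiv.swap_apply_left, h]
  rcases eq_or_ne x b with rfl | hxb
  · rw [Equiv.swap_apply_right, h]
  · rw [Equiv.swap_apply_of_ne_of_ne hxa hxb]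

lemma M_eq_X_mul (e e' : Fin (l + 1) → ℕ) (c : Fin (l + 1)) (h : e c = e' c + 1)
    (h2 : ∀ j, j ≠ c → e j = e' j) : M e = X c * M e' := by
  unfold M
  rw [← Finset.prod_erase_mul _ _ (Finset.mem_univ c),
    ← Finset.prod_erase_mul _ _ (Finset.mem_univ c)]
  rw [Finset.prod_congr rfl fun j hj => by rw [h2 j (Finset.ne_of_mem_erase hj)]]
  rw [h, pow_succ]
  ring

/-- staircase exponents with top `m-1` -/
def stc (m : ℕ) : Fin (l + 1) → ℕ := fun j => m - 1 - (j : ℕ)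

/-- mid-stage exponents -/
def midf (m k : ℕ) : Fin (l + 1) → ℕ := fun j =>
  if (j : ℕ) < k then m - 1 - (j : ℕ) else m - (j : ℕ)

lemma adjSwap_val (i : Fin l) (y : Fin (l + 1)) :
    ((adjSwap i y : Fin (l + 1)) : ℕ) =
      if (y : ℕ) = (i : ℕ) then (i : ℕ) + 1
      else if (y : ℕ) = (i : ℕ) + 1 then (i : ℕ) else (y : ℕ) := by
  have hc : ((i.castSucc : Fin (l + 1)) : ℕ) = (i : ℕ) := rfl
  have hs : ((i.succ : Fin (l + 1)) : ℕ) = (i : ℕ) + 1 := rfl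
  simp only [adjSwap, Equiv.swap_apply_def]
  split_ifs with h1 h2 h3 h4 h5 h6 h7 <;>
    simp only [Fin.ext_iff, hc, hs] at * <;> omega

section Comp
variable (D : Fin l → PP l → PP l)
variable (hD : ∀ (i : Fin l) (u : PP l),
  (X i.castSucc - X i.succ) * D i u = u - rename (adjSwap i) u)
include hD

lemma D_midf_step (m k : ℕ) (hk : k < m) (hm : m ≤ l) :
    D ⟨k, lt_of_lt_of_le hk hm⟩ (M (midf m k)) = M (midf m (k + 1)) := by
  set i : Fin l := ⟨k, lt_of_lt_of_le hk hm⟩ with hi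
  have hci : ((i.castSucc : Fin (l + 1)) : ℕ) = k := rfl
  have hsi : ((i.succ : Fin (l + 1)) : ℕ) = k + 1 := rfl
  have hfac : M (midf m k) = X i.castSucc * M (midf m (k + 1)) := by
    apply M_eq_X_mul
    · show midf m k i.castSucc = midf m (k + 1) i.castSucc + 1
      simp only [midf, hci]
      rw [if_neg (lt_irrefl k), if_pos (Nat.lt_succ_self k)]
      omega
    · intro j hj
      have hjv : (j : ℕ) ≠ k := fun hc => hj (Fin.ext (by rw [hc, hci]))
      simp only [midf]
      split_ifs <;> omega
  have hsym : rename ⇑(adjSwap i) (M (midf m (k + 1))) = M (midf m (k + 1)) := by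
    show rename ⇑(Equiv.swap i.castSucc i.succ) _ = _
    apply M_swap
    simp only [midf, hci, hsi]
    rw [if_pos (Nat.lt_succ_self k), if_neg (lt_irrefl (k + 1))]
    omega
  rw [hfac]
  exact D_X_mul D hD i _ hsym

lemma stage_inner (m : ℕ) (hm : m ≤ l) (k : ℕ) (hk : k ≤ m) :
    ∃ tb : List (Fin l), tb.length = k ∧
      (∀ x : Fin (l + 1), (((tb.map adjSwap).prod x : Fin (l + 1)) : ℕ) =
        if (x : ℕ) = 0 then k else if (x : ℕ) ≤ k then (x : ℕ) - 1 else (x : ℕ)) ∧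
      dcomp D tb (M (midf m 0)) = M (midf m k) := by
  induction k with
  | zero =>
    refine ⟨[], rfl, ?_, rfl⟩
    intro x
    simp only [List.map_nil, List.prod_nil, Equiv.Perm.one_apply]
    split_ifs <;> omega
  | succ k ih =>
    obtain ⟨tb, hlen, hact, hdc⟩ := ih (le_of_lt hk)
    set i : Fin l := ⟨k, lt_of_lt_of_le hk hm⟩ with hi
    refine ⟨i :: tb, by simp [hlen], ?_, ?_⟩
    · intro x
      have hx := x.isLt
      rw [List.map_cons, List.prod_cons, Equiv.Perm.mul_apply, adjSwap_val]
      have hiv : (i : ℕ) = k := rfl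
      rw [hiv, hact x]
      split_ifs <;> omega
    · rw [dcomp_cons, Function.comp_apply, hdc]
      exact D_midf_step D hD m k hk hm

lemma stage (m : ℕ) (hm : m ≤ l) :
    ∃ tb : List (Fin l), tb.length = m ∧
      (∀ x : Fin (l + 1), (((tb.map adjSwap).prod x : Fin (l + 1)) : ℕ) =
        if (x : ℕ) = 0 then m else if (x : ℕ) ≤ m then (x : ℕ) - 1 else (x : ℕ)) ∧
      dcomp D tb (M (stc (m + 1))) = M (stc m) := by
  obtain ⟨tb, h1, h2, h3⟩ := stage_inner D hD m hm m le_rfl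
  refine ⟨tb, h1, h2, ?_⟩
  have e0 : (midf m 0 : Fin (l + 1) → ℕ) = stc (m + 1) := by
    funext j; simp only [midf, stc]; split_ifs <;> omega
  have em : (midf m m : Fin (l + 1) → ℕ) = stc m := by
    funext j; simp only [midf, stc]; split_ifs <;> omega
  rw [e0, em] at h3
  exact h3

lemma big (m : ℕ) (hm1 : 1 ≤ m) (hm : m ≤ l + 1) :
    ∃ t : List (Fin l), 2 * t.length = m * (m - 1) ∧
      (∀ x : Fin (l + 1), (((t.map adjSwap).prod x : Fin (l + 1)) : ℕ) =
        if (x : ℕ) < m then m - 1 - (x : ℕ) else (x : ℕ)) ∧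
      dcomp D t (M (stc m)) = 1 := by
  induction m, hm1 using Nat.le_induction with
  | base =>
    refine ⟨[], rfl, ?_, ?_⟩
    · intro x
      simp only [List.map_nil, List.prod_nil, Equiv.Perm.one_apply]
      split_ifs <;> omega
    · show M (stc 1) = 1
      unfold M stc
      have h0 : ∀ j : Fin (l + 1), 1 - 1 - (j : ℕ) = 0 := fun j => by omega
      simp [h0]
  | succ m hm1 ih =>
    obtain ⟨t, hlen, hact, hdc⟩ := ih (by omega)
    obtain ⟨tb, hblen, hbact, hbdc⟩ := stage D hD m (by omega)
    obtain ⟨m', rfl⟩ : ∃ m', m = 1 + m' := ⟨m - 1, by omega⟩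
    refine ⟨t ++ tb, ?_, ?_, ?_⟩
    · rw [List.length_append]
      have e1 : 1 + m' - 1 = m' := by omega
      rw [e1] at hlen
      have e3 : (1 + m' + 1) * (1 + m' + 1 - 1) = (1 + m') * m' + 2 * (1 + m') := by
        have e2 : 1 + m' + 1 - 1 = 1 + m' := by omega
        rw [e2]; ring
      omega
    · intro x
      have hx := x.isLt
      rw [List.map_append, List.prod_append, Equiv.Perm.mul_apply]
      have h1 := hbact x
      have h2 := hact ((tb.map adjSwap).prod x)
      rw [h2, h1]
      have hx2 := ((tb.map adjSwap).prod x).isLt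
      split_ifs <;> omega
    · rw [dcomp_append, Function.comp_apply, hbdc, hdc]
end Comp

section RevS
variable (D : Fin l → PP l → PP l)
variable (hD : ∀ (i : Fin l) (u : PP l),
  (X i.castSucc - X i.succ) * D i u = u - rename (adjSwap i) u)
variable (Dw : Equiv.Perm (Fin (l + 1)) → PP l → PP l)
variable (hDw : ∀ (w : Equiv.Perm (Fin (l + 1))) (t : List (Fin l)),
  (t.map adjSwap).prod = w → t.length = permLen w →
  Dw w = (t.map D).foldr (· ∘ ·) id)
variable (S : PP l)

include hD hDw in
lemma Dw_rev_S (hS : S = ∏ i : Fin (l + 1), X i ^ (l - (i : ℕ))) :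
    Dw Fin.revPerm S = 1 := by
  obtain ⟨t, hlen, hact, hdc⟩ := big D hD (l + 1) (by omega) (le_refl (l + 1))
  have hprod : (t.map adjSwap).prod = (Fin.revPerm : Equiv.Perm (Fin (l + 1))) := by
    apply Equiv.ext
    intro x
    apply Fin.ext
    rw [hact x, if_pos x.isLt]
    have hrev : ((Fin.revPerm x : Fin (l + 1)) : ℕ) = l + 1 - (x + 1) := by
      show ((Fin.rev x : Fin (l + 1)) : ℕ) = l + 1 - (x + 1)
      rw [Fin.val_rev]
    rw [hrev]
    omega
  have hNlen : t.length = pinv (Fin.revPerm : Equiv.Perm (Fin (l + 1))) := by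
    have h2N := two_mul_Npairs (l := l)
    have e1 : (l + 1) * (l + 1 - 1) = (l + 1) * l := by norm_num
    rw [e1] at hlen
    have e2 : (l + 1) * (l + 1) = (l + 1) * l + (l + 1) := by ring
    rw [pinv_revPerm]
    omega
  rw [Dw_eq_dcomp D Dw hDw _ t hprod hNlen, hS]
  have hM : (M (stc (l + 1)) : PP l) = ∏ i : Fin (l + 1), X i ^ (l - (i : ℕ)) := by
    unfold M stc
    apply Finset.prod_congr rfl
    intro j _
    congr 1 <;> omega
  rw [← hM]
  exact hdc
end RevS

section Main
variable (D : Fin l → PP l → PP l)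
variable (hD : ∀ (i : Fin l) (u : PP l),
  (X i.castSucc - X i.succ) * D i u = u - rename (adjSwap i) u)
variable (Dw : Equiv.Perm (Fin (l + 1)) → PP l → PP l)
variable (hDw : ∀ (w : Equiv.Perm (Fin (l + 1))) (t : List (Fin l)),
  (t.map adjSwap).prod = w → t.length = permLen w →
  Dw w = (t.map D).foldr (· ∘ ·) id)
variable (S : PP l)

include hD hDw in
lemma Dw_zero (x : Equiv.Perm (Fin (l + 1))) : Dw x 0 = 0 := by
  obtain ⟨t, h1, h2⟩ := exists_word x
  rw [Dw_eq_dcomp D Dw hDw x t h1 h2, dcomp_zero D hD]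

include hD hDw in
lemma Dw_sub (x : Equiv.Perm (Fin (l + 1))) (u v : PP l) :
    Dw x (u - v) = Dw x u - Dw x v := by
  obtain ⟨t, h1, h2⟩ := exists_word x
  rw [Dw_eq_dcomp D Dw hDw x t h1 h2, dcomp_sub D hD]

include hD hDw in
lemma Dw_mul_symm (x : Equiv.Perm (Fin (l + 1))) (c u : PP l) (hc : c.IsSymmetric) :
    Dw x (c * u) = c * Dw x u := by
  obtain ⟨t, h1, h2⟩ := exists_word x
  rw [Dw_eq_dcomp D Dw hDw x t h1 h2, dcomp_mul_symm D hD t c u hc]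

include hD hDw in
lemma Dw_sum {α : Type} (x : Equiv.Perm (Fin (l + 1))) (s : Finset α) (f : α → PP l) :
    Dw x (∑ a ∈ s, f a) = ∑ a ∈ s, Dw x (f a) := by
  obtain ⟨t, h1, h2⟩ := exists_word x
  rw [Dw_eq_dcomp D Dw hDw x t h1 h2, dcomp_sum D hD]

include hD in
lemma invariant_of_D_zero (i : Fin l) (c : PP l) (h : D i c = 0) :
    rename (⇑(adjSwap i)) c = c := by
  have := hD i c
  rw [h, mul_zero] at this
  exact (sub_eq_zero.mp this.symm).symm

lemma isSymmetric_of_adj (u : PP l) (h : ∀ i : Fin l, rename (⇑(adjSwap i)) u = u) :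
    u.IsSymmetric := by
  intro σ
  obtain ⟨t, ht, -⟩ := exists_word σ
  rw [← ht]
  clear ht
  induction t with
  | nil => simp
  | cons i t ih =>
    rw [List.map_cons, List.prod_cons]
    have hco : ⇑(adjSwap i * (t.map adjSwap).prod) =
        ⇑(adjSwap i) ∘ ⇑((t.map adjSwap).prod) := rfl
    rw [hco, ← rename_rename, ih, h i]

lemma revPerm_inv : (Fin.revPerm : Equiv.Perm (Fin (l + 1)))⁻¹ = Fin.revPerm :=
  inv_eq_of_mul_eq_one_right revPerm_mul_revPerm

include hD hDw in
lemma extract_symm (k : ℕ) (u : PP l)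
    (hk : ∀ y : Equiv.Perm (Fin (l + 1)), pinv y < k → Dw (Fin.revPerm * y⁻¹) u = 0)
    (z : Equiv.Perm (Fin (l + 1))) (hz : pinv z = k) :
    (Dw (Fin.revPerm * z⁻¹) u).IsSymmetric := by
  apply isSymmetric_of_adj
  intro i
  apply invariant_of_D_zero D hD
  set x : Equiv.Perm (Fin (l + 1)) := Fin.revPerm * z⁻¹ with hx
  have hpx : pinv x + k = Npairs l := by
    have := pinv_rev_mul (z⁻¹ : Equiv.Perm (Fin (l + 1)))
    rw [pinv_inv, hz] at this
    exact this
  rcases pinv_adj_cases i x with hc | hc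
  · rw [Dw_adj_asc D hD Dw hDw i x hc u]
    set y : Equiv.Perm (Fin (l + 1)) := (Fin.revPerm * (adjSwap i * x))⁻¹ with hy
    have hyy : Fin.revPerm * y⁻¹ = adjSwap i * x := by
      rw [hy, inv_inv, ← mul_assoc, revPerm_mul_revPerm, one_mul]
    have hpy : pinv y < k := by
      have h1 : pinv (Fin.revPerm * (adjSwap i * x)) + pinv (adjSwap i * x) = Npairs l :=
        pinv_rev_mul _
      have h2 : pinv y = pinv (Fin.revPerm * (adjSwap i * x)) := by rw [hy, pinv_inv]
      omega
    rw [← hyy]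
    exact hk y hpy
  · exact Dw_adj_desc D hD Dw hDw i x hc u

include hD hDw in
lemma exist_aux (hS : S = ∏ i : Fin (l + 1), X i ^ (l - (i : ℕ))) :
    ∀ (j k : ℕ), k + j = Npairs l + 1 → ∀ u : PP l,
    (∀ y : Equiv.Perm (Fin (l + 1)), pinv y < k → Dw (Fin.revPerm * y⁻¹) u = 0) →
    ∃ c : Equiv.Perm (Fin (l + 1)) → PP l,
      (∀ z, (c z).IsSymmetric) ∧ u = ∑ z : Equiv.Perm (Fin (l + 1)), c z * Dw z S := by
  intro j
  induction j with
  | zero =>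
    intro k hk u hu
    have hu0 : u = 0 := by
      have := hu Fin.revPerm (by rw [pinv_revPerm]; omega)
      rw [revPerm_inv, revPerm_mul_revPerm, Dw_one D Dw hDw] at this
      simpa using this
    exact ⟨fun _ => 0, fun _ => IsSymmetric.zero, by simp [hu0]⟩
  | succ j ih =>
    intro k hk u hu
    classical
    set c' : Equiv.Perm (Fin (l + 1)) → PP l := fun z => Dw (Fin.revPerm * z⁻¹) u with hc'
    have hc'sym : ∀ z, pinv z = k → (c' z).IsSymmetric := fun z hz =>
      extract_symm D hD Dw hDw k u hu z hz
    set u' : PP l := u - ∑ z ∈ Finset.univ.filter (fun z => pinv z = k), c' z * Dw z S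
      with hu'
    have hstep : ∀ y : Equiv.Perm (Fin (l + 1)), pinv y < k + 1 →
        Dw (Fin.revPerm * y⁻¹) u' = 0 := by
      intro y hy
      rw [hu', Dw_sub D hD Dw hDw, Dw_sum D hD Dw hDw]
      have hterm : ∀ z ∈ Finset.univ.filter (fun z => pinv z = k),
          Dw (Fin.revPerm * y⁻¹) (c' z * Dw z S) =
          c' z * Dw (Fin.revPerm * y⁻¹) (Dw z S) := by
        intro z hzmem
        simp only [Finset.mem_filter, Finset.mem_univ, true_and] at hzmem
        exact Dw_mul_symm D hD Dw hDw _ _ _ (hc'sym z hzmem)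
      rw [Finset.sum_congr rfl hterm]
      rcases Nat.lt_or_ge (pinv y) k with hyk | hyk
      · rw [hu y hyk]
        rw [Finset.sum_eq_zero, sub_zero]
        intro z hzmem
        simp only [Finset.mem_filter, Finset.mem_univ, true_and] at hzmem
        rw [E_gt_zero D hD Dw hDw S y z (by omega), mul_zero]
      · have hyk' : pinv y = k := by omega
        rw [Finset.sum_eq_single y]
        · rw [E_self D hD Dw hDw S y, Dw_rev_S D hD Dw hDw S hS, mul_one, sub_self]
        · intro z hzmem hzne
          simp only [Finset.mem_filter, Finset.mem_univ, true_and] at hzmem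
          rw [E_ne_zero D hD Dw hDw S y z (by omega) hzne, mul_zero]
        · intro hnot
          exact absurd (Finset.mem_filter.mpr ⟨Finset.mem_univ y, hyk'⟩) hnot
    obtain ⟨c'', hc''sym, hc''sum⟩ := ih (k + 1) (by omega) u' hstep
    refine ⟨fun z => c'' z + if pinv z = k then c' z else 0, ?_, ?_⟩
    · intro z
      apply (hc''sym z).add
      split_ifs with h
      · exact hc'sym z h
      · exact IsSymmetric.zero
    · have expand : ∑ z : Equiv.Perm (Fin (l + 1)),
          (c'' z + if pinv z = k then c' z else 0) * Dw z S =
          (∑ z : Equiv.Perm (Fin (l + 1)), c'' z * Dw z S) +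
          ∑ z : Equiv.Perm (Fin (l + 1)), (if pinv z = k then c' z else 0) * Dw z S := by
        rw [← Finset.sum_add_distrib]
        apply Finset.sum_congr rfl
        intro z _
        ring
      rw [expand, ← hc''sum]
      have hsplit : ∑ z : Equiv.Perm (Fin (l + 1)),
          (if pinv z = k then c' z else 0) * Dw z S =
          ∑ z ∈ Finset.univ.filter (fun z => pinv z = k), c' z * Dw z S := by
        rw [Finset.sum_filter]
        apply Finset.sum_congr rfl
        intro z _
        split_ifs <;> simp
      rw [hsplit, hu']
      ring

include hD hDw in
lemma unique_aux (hS : S = ∏ i : Fin (l + 1), X i ^ (l - (i : ℕ)))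
    (f : Equiv.Perm (Fin (l + 1)) → PP l) (hsym : ∀ z, (f z).IsSymmetric)
    (hsum : ∑ z : Equiv.Perm (Fin (l + 1)), f z * Dw z S = 0) : ∀ z, f z = 0 := by
  have key : ∀ k : ℕ, ∀ z : Equiv.Perm (Fin (l + 1)), pinv z = k → f z = 0 := by
    intro k
    induction k using Nat.strong_induction_on with
    | _ k ihk =>
      intro z hz
      have h0 := congrArg (Dw (Fin.revPerm * z⁻¹)) hsum
      rw [Dw_zero D hD Dw hDw, Dw_sum D hD Dw hDw] at h0
      have hterm : ∀ y : Equiv.Perm (Fin (l + 1)), y ∈ Finset.univ →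
          Dw (Fin.revPerm * z⁻¹) (f y * Dw y S) =
          f y * Dw (Fin.revPerm * z⁻¹) (Dw y S) := fun y _ =>
        Dw_mul_symm D hD Dw hDw _ _ _ (hsym y)
      rw [Finset.sum_congr rfl hterm] at h0
      rw [Finset.sum_eq_single z] at h0
      · rw [E_self D hD Dw hDw S z, Dw_rev_S D hD Dw hDw S hS, mul_one] at h0
        exact h0
      · intro y _ hyne
        rcases Nat.lt_trichotomy (pinv y) (pinv z) with hlt | heq | hgt
        · rw [ihk (pinv y) (by omega) y rfl, zero_mul]
        · rw [E_ne_zero D hD Dw hDw S z y heq hyne, mul_zero]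
        · rw [E_gt_zero D hD Dw hDw S z y hgt, mul_zero]
      · intro hnot
        exact absurd (Finset.mem_univ z) hnot
  exact fun z => key (pinv z) z rfl
end Main

end St18

open St18 in
set_option maxHeartbeats 1000000 in
/-- Let `G = U(l+1)` with diagonal maximal torus `T`, characters
`ε_1, …, ε_{l+1}` (the variables `X i` of `S = ℤ[ε_1,…,ε_{l+1}]`), Weyl group
`W = S_{l+1}` acting by permuting the variables, and longest element `w₀` the
order-reversing permutation.  Let `𝔖 = ε_1^l ε_2^{l-1} ⋯ ε_l` and let
`𝔖_w = ∂_{w⁻¹w₀}(𝔖)` be the Schubert polynomials, where `∂_w = ∂_{i_1} ⋯ ∂_{i_k}`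
along any reduced word for `w` in the adjacent transpositions, and the divided
difference `∂_i` is characterized by `(ε_i - ε_{i+1})·∂_i(u) = u - s_i(u)`.
Then the Schubert polynomials `(𝔖_w)_{w ∈ W}` form a basis of `S` as a module
over the ring `S^W` of symmetric polynomials: every `u ∈ S` is uniquely
`u = ∑_{w ∈ W} c_w 𝔖_w` with symmetric coefficients `c_w ∈ S^W`. -/
theorem statement18 {l : ℕ}
    (D : Fin l → MvPolynomial (Fin (l + 1)) ℤ → MvPolynomial (Fin (l + 1)) ℤ)
    (hD : ∀ (i : Fin l) (u : MvPolynomial (Fin (l + 1)) ℤ),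
      (X i.castSucc - X i.succ) * D i u = u - rename (adjSwap i) u)
    (Dw : Equiv.Perm (Fin (l + 1)) →
      MvPolynomial (Fin (l + 1)) ℤ → MvPolynomial (Fin (l + 1)) ℤ)
    (hDw : ∀ (w : Equiv.Perm (Fin (l + 1))) (t : List (Fin l)),
      (t.map adjSwap).prod = w → t.length = permLen w →
      Dw w = (t.map D).foldr (· ∘ ·) id)
    (S : MvPolynomial (Fin (l + 1)) ℤ)
    (hS : S = ∏ i : Fin (l + 1), X i ^ (l - (i : ℕ)))
    (u : MvPolynomial (Fin (l + 1)) ℤ) :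
    ∃! c : Equiv.Perm (Fin (l + 1)) → MvPolynomial (Fin (l + 1)) ℤ,
      (∀ w, (c w).IsSymmetric) ∧
      u = ∑ w : Equiv.Perm (Fin (l + 1)), c w * Dw (w⁻¹ * Fin.revPerm) S := by
  classical
  have hkey : ∀ w : Equiv.Perm (Fin (l + 1)),
      Fin.revPerm * (w⁻¹ * Fin.revPerm)⁻¹ = w := fun w => by group
  let e : Equiv.Perm (Fin (l + 1)) ≃ Equiv.Perm (Fin (l + 1)) :=
    { toFun := fun w => w⁻¹ * Fin.revPerm
      invFun := fun z => Fin.revPerm * z⁻¹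
      left_inv := fun w => by group
      right_inv := fun z => by group }
  obtain ⟨c', hc'sym, hc'sum⟩ := exist_aux D hD Dw hDw S hS (Npairs l + 1) 0 (by omega) u
    (fun y hy => absurd hy (Nat.not_lt_zero _))
  have reindex : ∀ gf : Equiv.Perm (Fin (l + 1)) → MvPolynomial (Fin (l + 1)) ℤ,
      ∑ w : Equiv.Perm (Fin (l + 1)), gf (w⁻¹ * Fin.revPerm) * Dw (w⁻¹ * Fin.revPerm) S
        = ∑ z : Equiv.Perm (Fin (l + 1)), gf z * Dw z S := by
    intro gf
    exact Equiv.sum_comp e (fun z => gf z * Dw z S)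
  refine ⟨fun w => c' (w⁻¹ * Fin.revPerm), ⟨fun w => hc'sym _, ?_⟩, ?_⟩
  · rw [hc'sum, reindex c']
  · rintro c₂ ⟨hsym₂, hsum₂⟩
    have h1 : ∑ w : Equiv.Perm (Fin (l + 1)), c₂ w * Dw (w⁻¹ * Fin.revPerm) S
        = ∑ z : Equiv.Perm (Fin (l + 1)), c₂ (Fin.revPerm * z⁻¹) * Dw z S := by
      rw [← reindex (fun z => c₂ (Fin.revPerm * z⁻¹))]
      apply Finset.sum_congr rfl
      intro w _
      rw [hkey w]
    have hfsum : ∑ z : Equiv.Perm (Fin (l + 1)),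
        (c₂ (Fin.revPerm * z⁻¹) - c' z) * Dw z S = 0 := by
      have expand : ∀ z : Equiv.Perm (Fin (l + 1)),
          (c₂ (Fin.revPerm * z⁻¹) - c' z) * Dw z S =
          c₂ (Fin.revPerm * z⁻¹) * Dw z S - c' z * Dw z S := fun z => by ring
      rw [Finset.sum_congr rfl fun z _ => expand z, Finset.sum_sub_distrib,
        ← h1, ← hsum₂, ← hc'sum, sub_self]
    have hzero := unique_aux D hD Dw hDw S hS
      (fun z => c₂ (Fin.revPerm * z⁻¹) - c' z)
      (fun z => ((hsym₂ _).sub (hc'sym _))) hfsum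
    funext w
    have hz := hzero (w⁻¹ * Fin.revPerm)
    simp only [hkey w] at hz
    exact sub_eq_zero.mp hz
end
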